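/- Let k be a positive integer, let 0 = N₀ ≤ N₁ ≤ ⋯ ≤ N_k be integers with N_k ≥ 1, and let U₁, …, U_{N_k} be independent integrable real random variables such that for each block index b ∈ {1,…,k}, the variables U_j for j ∈ {N_{b−1}+1, …, N_b} all have mean I_b and variance V_b. Set S = Σ_{j=1}^{N_k} U_j, Ī = Σ_{b=1}^{k} (N_b − N_{b−1})·I_b, and V̄ = Σ_{b=1}^{k} (N_b − N_{b−1})·V_b, and assume V̄ > 0. Suppose there is a constant B ≥ 0 such that for every λ ∈ ℝ, | P[ (S − Ī)/√V̄ ≥ λ ] − Q(λ) | ≤ B/√(N_k). Let ε ∈ (0,1), s ∈ (0,1], let M be a real number with M ≥ 2, and let λ ∈ ℝ be such that Q(λ) + B/√(N_k) + N_k^{−s} ≤ ε and log₂((M−1)/2) + s·log₂ N_k ≤ Ī − √V̄·λ. Then E[ 2^{ − max{ 0 , S − log₂((M−1)/2) } } ] ≤ ε. -/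

import Mathlib

open MeasureTheory ProbabilityTheory Finset

/-! Split the dependence-testing expression `E[2^{-max(0, S - γ)}]` at the threshold
`γ + s·log₂ N`: below it the integrand is at most `1`, above it at most `2^{-s·log₂ N} = N^{-s}`.
The threshold lies below `Ī - √V̄·λ`, so the first event has probability at most
`P[(S - Ī)/√V̄ < -λ] = 1 - P[(S - Ī)/√V̄ ≥ -λ]`, which the Berry–Esseen bound and the symmetry
`Q(λ) + Q(-λ) = 1` bound by `Q(λ) + B/√N`. -/

/-- The Gaussian Q-function `Q(λ) = ∫_λ^∞ (1/√(2π)) e^{-t²/2} dt`. -/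
noncomputable def gaussQ (l : ℝ) : ℝ :=
  ∫ t in Set.Ioi l, (Real.sqrt (2 * Real.pi))⁻¹ * Real.exp (-t ^ 2 / 2)

lemma gaussQ_eq_integral_gaussianPDFReal (l : ℝ) :
    gaussQ l = ∫ t in Set.Ioi l, gaussianPDFReal 0 1 t := by
  simp [gaussQ, gaussianPDFReal]

lemma gaussQ_add_gaussQ_neg (l : ℝ) : gaussQ l + gaussQ (-l) = 1 := by
  have hneg : gaussQ (-l) = ∫ t in Set.Iic l, gaussianPDFReal 0 1 t := by
    rw [gaussQ_eq_integral_gaussianPDFReal, ← integral_comp_neg_Iic]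
    simp [gaussianPDFReal]
  rw [hneg, add_comm, gaussQ_eq_integral_gaussianPDFReal,
    intervalIntegral.integral_Iic_add_Ioi (integrable_gaussianPDFReal 0 1).integrableOn
      (integrable_gaussianPDFReal 0 1).integrableOn,
    integral_gaussianPDFReal_eq_one 0 one_ne_zero]

lemma rpow_neg_mul_logb {b x : ℝ} (hb : 0 < b) (hb1 : b ≠ 1) (hx : 0 < x) (s : ℝ) :
    b ^ (-(s * Real.logb b x)) = x ^ (-s) := by
  rw [show -(s * Real.logb b x) = Real.logb b x * -s by ring, Real.rpow_mul hb.le,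
    Real.rpow_logb hb hb1 hx]

section DependenceTesting

variable {a : ℝ}

lemma rpow_neg_max_le_one (ha : 1 ≤ a) (y : ℝ) : a ^ (-max 0 y) ≤ 1 :=
  Real.rpow_le_one_of_one_le_of_nonpos ha (neg_nonpos.mpr (le_max_left 0 y))

lemma rpow_neg_max_sub_le_of_add_le (ha : 1 ≤ a) {x γ t : ℝ} (h : γ + t ≤ x) :
    a ^ (-max 0 (x - γ)) ≤ a ^ (-t) :=
  Real.rpow_le_rpow_of_exponent_le ha (by linarith [le_max_right 0 (x - γ)])

variable {Ω : Type*} [MeasurableSpace Ω] {μ : Measure Ω} [IsProbabilityMeasure μ]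

lemma integral_rpow_neg_max_sub_le (ha : 1 ≤ a) {X : Ω → ℝ} (hX : Measurable X) (γ t : ℝ) :
    ∫ ω, a ^ (-max 0 (X ω - γ)) ∂μ ≤ μ.real {ω | X ω < γ + t} + a ^ (-t) := by
  set A := {ω | X ω < γ + t}
  have hA : MeasurableSet A := measurableSet_lt hX measurable_const
  have hbound : Integrable (fun ω => A.indicator 1 ω + a ^ (-t)) μ :=
    ((integrable_const 1).indicator hA).add (integrable_const _)
  have hpoint (ω : Ω) : a ^ (-max 0 (X ω - γ)) ≤ A.indicator 1 ω + a ^ (-t) := by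
    by_cases hω : ω ∈ A
    · rw [Set.indicator_of_mem hω, Pi.one_apply]
      linarith [rpow_neg_max_le_one ha (X ω - γ), Real.rpow_nonneg (zero_le_one.trans ha) (-t)]
    · rw [Set.indicator_of_notMem hω, zero_add]
      exact rpow_neg_max_sub_le_of_add_le ha (not_lt.mp hω)
  have hint : Integrable (fun ω => a ^ (-max 0 (X ω - γ))) μ := by
    refine hbound.mono' (Measurable.aestronglyMeasurable (by fun_prop)) (ae_of_all _ fun ω => ?_)
    rw [Real.norm_of_nonneg (Real.rpow_nonneg (zero_le_one.trans ha) _)]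
    exact hpoint ω
  calc ∫ ω, a ^ (-max 0 (X ω - γ)) ∂μ ≤ ∫ ω, (A.indicator 1 ω + a ^ (-t)) ∂μ :=
        integral_mono hint hbound hpoint
    _ = μ.real A + a ^ (-t) := by
        rw [integral_add ((integrable_const 1).indicator hA) (integrable_const _),
          integral_indicator_one hA, integral_const, probReal_univ, one_smul]

lemma measureReal_lt_neg_le_gaussQ_add {X : Ω → ℝ} (hX : Measurable X) {l δ : ℝ}
    (h : |μ.real {ω | X ω ≥ -l} - gaussQ (-l)| ≤ δ) :
    μ.real {ω | X ω < -l} ≤ gaussQ l + δ := by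
  have hcompl : {ω | X ω < -l} = {ω | X ω ≥ -l}ᶜ := by ext; simp
  rw [hcompl, probReal_compl_eq_one_sub (measurableSet_le measurable_const hX)]
  linarith [(abs_le.mp h).1, gaussQ_add_gaussQ_neg l]

end DependenceTesting

theorem second_order_rate_heterogeneous_general {Ω : Type*} [MeasurableSpace Ω]
    (μ : Measure Ω) [IsProbabilityMeasure μ]
    (k : ℕ) (N : ℕ → ℕ) (hNk : 1 ≤ N k)
    (U : ℕ → Ω → ℝ)
    (hmeas : ∀ j, Measurable (U j))
    (Ibar Vbar : ℝ)
    (hVbarpos : 0 < Vbar)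
    (B : ℝ)
    (hBE : ∀ l : ℝ,
      |(μ {ω | ((∑ j ∈ Finset.range (N k), U j ω) - Ibar) / Real.sqrt Vbar ≥ l}).toReal
          - gaussQ l| ≤ B / Real.sqrt (N k))
    (ε : ℝ)
    (s : ℝ)
    (M : ℝ)
    (l : ℝ)
    (hl1 : gaussQ l + B / Real.sqrt (N k) + ((N k : ℝ)) ^ (-s) ≤ ε)
    (hl2 : Real.logb 2 ((M - 1) / 2) + s * Real.logb 2 (N k) ≤
      Ibar - Real.sqrt Vbar * l) :
    ∫ ω, (2 : ℝ) ^
        (-(max 0 ((∑ j ∈ Finset.range (N k), U j ω) - Real.logb 2 ((M - 1) / 2)))) ∂μ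
      ≤ ε := by
  set S : Ω → ℝ := fun ω => ∑ j ∈ Finset.range (N k), U j ω
  have hS : Measurable S := Finset.measurable_sum _ fun j _ => hmeas j
  have hZ : Measurable fun ω => (S ω - Ibar) / Real.sqrt Vbar := by fun_prop
  have htail : {ω | S ω < Real.logb 2 ((M - 1) / 2) + s * Real.logb 2 (N k)} ⊆
      {ω | (S ω - Ibar) / Real.sqrt Vbar < -l} := fun ω hω => by
    change (S ω - Ibar) / Real.sqrt Vbar < -l
    rw [div_lt_iff₀ (Real.sqrt_pos.mpr hVbarpos)]
    linarith [hω.trans_le hl2]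
  calc ∫ ω, (2 : ℝ) ^ (-max 0 (S ω - Real.logb 2 ((M - 1) / 2))) ∂μ
      ≤ μ.real {ω | S ω < Real.logb 2 ((M - 1) / 2) + s * Real.logb 2 (N k)}
          + 2 ^ (-(s * Real.logb 2 (N k))) :=
        integral_rpow_neg_max_sub_le one_le_two hS _ _
    _ ≤ μ.real {ω | (S ω - Ibar) / Real.sqrt Vbar < -l} + (N k : ℝ) ^ (-s) := by
        rw [rpow_neg_mul_logb two_pos (by norm_num) (by exact_mod_cast hNk)]
        exact add_le_add_left (measureReal_mono htail) _
    _ ≤ gaussQ l + B / Real.sqrt (N k) + (N k : ℝ) ^ (-s) := by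
        gcongr
        exact measureReal_lt_neg_le_gaussQ_add hZ (hBE (-l))
    _ ≤ ε := hl1

/-- The quantitative core of Propositions 2 and 3 of the paper (heterogeneous
blocklengths): with block boundaries `0 = N 0 ≤ N 1 ≤ ⋯ ≤ N k`, independent
information densities `U j` whose mean and variance are `I b` and `V b` on the `b`-th
block `{N (b-1), …, N b - 1}`, block-averaged mean `Ī = Σ_b (N b - N (b-1))·I b` and
variance `V̄ = Σ_b (N b - N (b-1))·V b > 0` satisfying a Berry–Esseen bound with
constant `B`, and any `ε ∈ (0,1)`, `s ∈ (0,1]`, codebook size `M ≥ 2` and `λ` with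
`Q(λ) + B/√(N k) + (N k)^{-s} ≤ ε` and
`log₂((M-1)/2) + s·log₂(N k) ≤ Ī - √V̄·λ`, the dependence-testing expression satisfies
`E[2^{-max{0, S - log₂((M-1)/2)}}] ≤ ε` where `S = Σ_{j < N k} U j`. -/
theorem second_order_rate_heterogeneous {Ω : Type*} [MeasurableSpace Ω]
    (μ : Measure Ω) [IsProbabilityMeasure μ]
    (k : ℕ) (hk : 0 < k) (N : ℕ → ℕ) (hN0 : N 0 = 0)
    (hNmono : ∀ b < k, N b ≤ N (b + 1)) (hNk : 1 ≤ N k)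
    (U : ℕ → Ω → ℝ)
    (hmeas : ∀ j, Measurable (U j))
    (hint : ∀ j, Integrable (U j) μ)
    (hindep : iIndepFun (fun j : Fin (N k) => U j) μ)
    (I V : ℕ → ℝ)
    (hmean : ∀ b < k, ∀ j ∈ Finset.Ico (N b) (N (b + 1)), ∫ ω, U j ω ∂μ = I b)
    (hvar : ∀ b < k, ∀ j ∈ Finset.Ico (N b) (N (b + 1)), variance (U j) μ = V b)
    (Ibar Vbar : ℝ)
    (hIbar : Ibar = ∑ b ∈ Finset.range k, ((N (b + 1) : ℝ) - N b) * I b)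
    (hVbar : Vbar = ∑ b ∈ Finset.range k, ((N (b + 1) : ℝ) - N b) * V b)
    (hVbarpos : 0 < Vbar)
    (B : ℝ) (hB : 0 ≤ B)
    (hBE : ∀ l : ℝ,
      |(μ {ω | ((∑ j ∈ Finset.range (N k), U j ω) - Ibar) / Real.sqrt Vbar ≥ l}).toReal
          - gaussQ l| ≤ B / Real.sqrt (N k))
    (ε : ℝ) (hε0 : 0 < ε) (hε1 : ε < 1)
    (s : ℝ) (hs0 : 0 < s) (hs1 : s ≤ 1)
    (M : ℝ) (hM : 2 ≤ M)
    (l : ℝ)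
    (hl1 : gaussQ l + B / Real.sqrt (N k) + ((N k : ℝ)) ^ (-s) ≤ ε)
    (hl2 : Real.logb 2 ((M - 1) / 2) + s * Real.logb 2 (N k) ≤
      Ibar - Real.sqrt Vbar * l) :
    ∫ ω, (2 : ℝ) ^
        (-(max 0 ((∑ j ∈ Finset.range (N k), U j ω) - Real.logb 2 ((M - 1) / 2)))) ∂μ
      ≤ ε :=
  second_order_rate_heterogeneous_general μ k N hNk U hmeas Ibar Vbar hVbarpos B hBE ε s M l hl1 hl2
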